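/- For each k, and each pair (a,b) with 0 ≤ a,b ≤ k, the polynomial p = Σ_{j=0}^{m} (−1)^j/j! · (−c)_j (a+b−c−k)_j / (|b−a|+1)_j · z^{k−(a+b−c)−j} w^{a−c+j} z̄^{c−j} w̄^{b−c+j}, where m = min{a,b,k−a,k−b}, c = min{a,b}, and (x)_j denotes the rising factorial, is harmonic: Δp = 0 for Δ = 4(∂_{z̄}∂_z + ∂_{w̄}∂_w). -/

import Mathlib

/-!
With `c = min a b`, `A = k - max a b`, `s = a - c`, `t = b - c` (so `s * t = 0`), the `j`-th
term of `p` is `λ_j z^{A-j} w^{s+j} z̄^{c-j} w̄^{t+j}`, where `λ_j` is the `j`-th term of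
`₂F₁(-c, -A; s + t + 1; -1)`. The Laplacian sends it to `4 λ_j (A-j)(c-j)` times the monomial
`z^{A-j-1} w^{s+j} z̄^{c-j-1} w̄^{t+j}` plus `4 λ_j (s+j)(t+j)` times the same monomial with
`j - 1` in place of `j`, so `Δp` telescopes. Each monomial receives
`λ_j (A-j)(c-j) + λ_{j+1} (s+j+1)(t+j+1)`, which vanishes by the term ratio of `₂F₁`, since
`(s+j+1)(t+j+1) = (j+1)(s+t+1+j)` when `s * t = 0`. The two end contributions carry the factors
`s t = 0` and `(A-m)(c-m) = 0` for `m = min c A`.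
-/

open MvPolynomial Finset

/-- The rising factorial (Pochhammer symbol) `(x)_n = x(x+1)⋯(x+n−1)`. -/
def risingFac (x : ℤ) : ℕ → ℤ
  | 0 => 1
  | n + 1 => risingFac x n * (x + n)

/-- The Laplacian `Δ = 4(∂_{z̄}∂_z + ∂_{w̄}∂_w)` on polynomials in the four
independent variables `z = X 0`, `w = X 1`, `z̄ = X 2`, `w̄ = X 3`. -/
noncomputable def Lap (f : MvPolynomial (Fin 4) ℂ) : MvPolynomial (Fin 4) ℂ :=
  4 * (pderiv 2 (pderiv 0 f) + pderiv 3 (pderiv 1 f))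

lemma risingFac_succ (x : ℤ) (n : ℕ) : risingFac x (n + 1) = risingFac x n * (x + n) := rfl

lemma risingFac_pos {x : ℤ} (hx : 0 < x) : ∀ n, 0 < risingFac x n
  | 0 => one_pos
  | n + 1 => mul_pos (risingFac_pos hx n) (by omega)

/-- The `j`-th term of the hypergeometric series `₂F₁(α, β; γ; -1)`. -/
noncomputable def hyperCoeff (α β γ : ℤ) (j : ℕ) : ℂ :=
  (-1) ^ j * (risingFac α j : ℂ) * (risingFac β j : ℂ) / (j.factorial * (risingFac γ j : ℂ))

lemma hyperCoeff_succ_mul {α β γ : ℤ} {j : ℕ} (hγ : risingFac γ (j + 1) ≠ 0) :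
    hyperCoeff α β γ (j + 1) * ((j + 1) * (γ + j)) =
      -(hyperCoeff α β γ j * ((α + j) * (β + j))) := by
  rw [risingFac_succ, mul_ne_zero_iff] at hγ
  have hfac : (j.factorial : ℂ) ≠ 0 := by exact_mod_cast j.factorial_ne_zero
  have hrise : (risingFac γ j : ℂ) ≠ 0 := by exact_mod_cast hγ.1
  have hlast : (γ : ℂ) + j ≠ 0 := by exact_mod_cast hγ.2
  have hsucc : (j : ℂ) + 1 ≠ 0 := by exact_mod_cast j.succ_ne_zero
  simp only [hyperCoeff, risingFac_succ, Nat.factorial_succ]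
  push_cast
  field_simp
  ring

lemma Lap_smul (r : ℂ) (f : MvPolynomial (Fin 4) ℂ) : Lap (r • f) = r • Lap f := by
  simp only [Lap, Derivation.map_smul, ← smul_add, mul_smul_comm]

lemma Lap_sum {ι : Type*} (s : Finset ι) (f : ι → MvPolynomial (Fin 4) ℂ) :
    Lap (∑ i ∈ s, f i) = ∑ i ∈ s, Lap (f i) := by
  simp only [Lap, map_sum, ← sum_add_distrib, mul_sum]

noncomputable def zwMonomial (p q r u : ℕ) : MvPolynomial (Fin 4) ℂ :=
  X 0 ^ p * X 1 ^ q * X 2 ^ r * X 3 ^ u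

lemma Lap_zwMonomial (p q r u : ℕ) :
    Lap (zwMonomial p q r u) =
      (4 * p * r : ℂ) • zwMonomial (p - 1) q (r - 1) u +
        (4 * q * u : ℂ) • zwMonomial p (q - 1) r (u - 1) := by
  simp [zwMonomial, Lap, pderiv_X, smul_eq_C_mul, map_ofNat C]
  ring

lemma sum_range_succ_add_eq_zero {M : Type*} [AddCommMonoid M] {g h : ℕ → M} {m : ℕ}
    (hg : g m = 0) (hh : h 0 = 0) (hgh : ∀ j < m, g j + h (j + 1) = 0) :
    ∑ j ∈ range (m + 1), (g j + h j) = 0 := by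
  rw [sum_add_distrib, sum_range_succ g, sum_range_succ' h, hg, hh, add_zero, add_zero,
    ← sum_add_distrib]
  exact sum_eq_zero fun j hj => hgh j (mem_range.1 hj)

theorem Lap_sum_hyperCoeff_smul_zwMonomial (c A s t : ℕ) (hst : s * t = 0) :
    Lap (∑ j ∈ range (min c A + 1), hyperCoeff (-c) (-A) (s + t + 1) j •
      zwMonomial (A - j) (s + j) (c - j) (t + j)) = 0 := by
  simp only [Lap_sum, Lap_smul, Lap_zwMonomial, smul_add, smul_smul]
  apply sum_range_succ_add_eq_zero
  · obtain h | h : A - min c A = 0 ∨ c - min c A = 0 := by omega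
    all_goals simp [h]
  · obtain h | h := Nat.mul_eq_zero.1 hst
    all_goals simp [h]
  intro j hj
  have hrec := hyperCoeff_succ_mul (α := -c) (β := -A)
    (risingFac_pos (x := s + t + 1) (by omega) (j + 1)).ne'
  have hst' : (s : ℂ) * t = 0 := by exact_mod_cast hst
  rw [show A - (j + 1) = A - j - 1 by omega, show c - (j + 1) = c - j - 1 by omega,
    Nat.add_succ_sub_one, Nat.add_succ_sub_one, ← add_smul]
  convert zero_smul ℂ _
  push_cast [Nat.cast_sub (show j ≤ A by omega), Nat.cast_sub (show j ≤ c by omega)] at hrec ⊢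
  linear_combination 4 * hrec + 4 * hyperCoeff (-c) (-A) (s + t + 1) (j + 1) * hst'

/-- The polynomial
`p_k^{(a,b)} = Σ_{j=0}^{m} (−1)^j/j! · (−c)_j (a+b−c−k)_j / (|b−a|+1)_j ·
z^{k−(a+b−c)−j} w^{a−c+j} z̄^{c−j} w̄^{b−c+j}` is harmonic, where
`m = min{a,b,k−a,k−b}` and `c = min{a,b}`. -/
theorem pab_harmonic (k a b : ℕ) (ha : a ≤ k) (hb : b ≤ k) :
    Lap (∑ j ∈ Finset.range (min (min a b) (min (k - a) (k - b)) + 1),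
        (((-1 : ℂ) ^ j * ((risingFac (-(min a b : ℤ)) j : ℤ) : ℂ) *
            ((risingFac ((a : ℤ) + b - min a b - k) j : ℤ) : ℂ)) /
          ((j.factorial : ℂ) * ((risingFac (|(b : ℤ) - a| + 1) j : ℤ) : ℂ))) •
        ((X 0 : MvPolynomial (Fin 4) ℂ) ^ (k - (a + b - min a b) - j) *
          X 1 ^ (a - min a b + j) * X 2 ^ (min a b - j) *
          X 3 ^ (b - min a b + j))) = 0 := by
  have hA : min (k - a) (k - b) = k - (a + b - min a b) := by omega
  have hα : -(min (a : ℤ) b) = -((min a b : ℕ) : ℤ) := by omega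
  have hβ : (a : ℤ) + b - min a b - k = -((k - (a + b - min a b) : ℕ) : ℤ) := by omega
  have hγ : |(b : ℤ) - a| + 1 = ((a - min a b : ℕ) : ℤ) + (b - min a b : ℕ) + 1 := by
    rw [abs_eq_max_neg]; omega
  rw [hA, hα, hβ, hγ]
  exact Lap_sum_hyperCoeff_smul_zwMonomial _ _ _ _ (Nat.mul_eq_zero.2 (by omega))
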